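/- arXiv:2307.12843 — 4 statements merged into one kernel-verified Lean document; each statement's English description precedes it below -/
import Mathlib

section
/- For every d ∈ ℕ, Σ_{j ∈ ℤ^d ∖ {0}} ( ∏_{h=1}^d max{|j_h|, 1} )^{−2} = (π²/3) Σ_{h=1}^d (π²/3 + 1)^{h−1}. In particular the sum on the left converges. -/
open MeasureTheory Filter Finset

noncomputable section

/-- Euclidean norm on `Fin d → ℝ`. -/
def euclNorm {d : ℕ} (x : Fin d → ℝ) : ℝ := Real.sqrt (∑ h, (x h) ^ 2)

/-- Tensor cosine basis function `e_k` associated to the box `[-L, L]`. -/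
def cosBasis {d : ℕ} (L : Fin d → ℝ) (k : Fin d → ℕ) (x : Fin d → ℝ) : ℝ :=
  ∏ h, Real.cos ((k h : ℝ) * Real.pi * (x h + L h) / (2 * L h))

/-- Weight `2^{-Λ(k)}` where `Λ(k)` is the number of zero components of `k`;
used in the primed sums `Σ'`. -/
def wt {d : ℕ} (k : Fin d → ℕ) : ℝ :=
  (1 / 2 : ℝ) ^ (Finset.univ.filter (fun h => k h = 0)).card

/-- Fourier transform `f̂(u) = ∫ f(x) e^{i u·x} dx`. -/
def fourierT {d : ℕ} (f : (Fin d → ℝ) → ℝ) (u : Fin d → ℝ) : ℂ :=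
  ∫ x : Fin d → ℝ, (f x : ℂ) * Complex.exp (Complex.I * (∑ h, (u h : ℂ) * (x h : ℂ)))

/-- The quantity `B_f(L)` from the definition of COS-admissibility. -/
def Bf {d : ℕ} (f : (Fin d → ℝ) → ℝ) (L : Fin d → ℝ) : ℝ :=
  ∑' k : Fin d → ℕ, wt k * (∏ h, L h)⁻¹ *
    (∫ x in (Set.Icc (-L) L)ᶜ, f x * cosBasis L k x) ^ 2

/-- COS-admissibility: `B_f(L) → 0` as `min_h L_h → ∞`, i.e. as all components
of `L` tend to infinity. -/
def COSAdmissible {d : ℕ} (f : (Fin d → ℝ) → ℝ) : Prop :=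
  Filter.Tendsto (fun L : Fin d → ℝ => Bf f L) Filter.atTop (nhds 0)

/-- Sign vectors `s ∈ {1} × {-1,1}^{d-1}`, encoded as boolean vectors whose first
component is `true`. -/
def signSet (d : ℕ) : Finset (Fin d → Bool) :=
  Finset.univ.filter fun σ => ∀ h : Fin d, (h : ℕ) = 0 → σ h = true

/-- The sign `±1` associated to a boolean. -/
def sgn {d : ℕ} (σ : Fin d → Bool) (h : Fin d) : ℝ := if σ h then 1 else -1

/-- COS coefficients computed from a (possibly approximate) Fourier transform `ϑ`:
`c_k = (2^{d-1} ∏_h L_h)⁻¹ Σ_s Re{ ϑ(π s k/(2L)) exp(i (π/2) s·k) }`. -/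
def cosCoef {d : ℕ} (ϑ : (Fin d → ℝ) → ℂ) (L : Fin d → ℝ) (k : Fin d → ℕ) : ℝ :=
  ((2 : ℝ) ^ (d - 1) * ∏ h, L h)⁻¹ *
    ∑ σ ∈ signSet d,
      (ϑ (fun h => Real.pi * (sgn σ h * (k h : ℝ)) / (2 * L h)) *
        Complex.exp (Complex.I * ((Real.pi : ℂ) / 2) *
          ((∑ h, sgn σ h * (k h : ℝ) : ℝ) : ℂ))).re

/-- Classical Fourier-cosine coefficients `a_k` of `f·1_{[-L,L]}`. -/
def aCoef {d : ℕ} (f : (Fin d → ℝ) → ℝ) (L : Fin d → ℝ) (k : Fin d → ℕ) : ℝ :=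
  (∏ h, L h)⁻¹ * ∫ x in Set.Icc (-L) L, f x * cosBasis L k x

/-- The constant `Ξ = (π²/3) Σ_{h=1}^d (π²/3 + 1)^{h-1}`. -/
def Xi (d : ℕ) : ℝ :=
  Real.pi ^ 2 / 3 * ∑ h ∈ Finset.range d, (Real.pi ^ 2 / 3 + 1) ^ h

/-- A function decays exponentially if `|f(x)| ≤ C₁ e^{-C₂ |x|}` for `|x| > m`. -/
def DecaysExp {d : ℕ} (f : (Fin d → ℝ) → ℝ) : Prop :=
  ∃ C₁ C₂ m : ℝ, 0 < C₁ ∧ 0 < C₂ ∧ 0 < m ∧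
    ∀ x, m < euclNorm x → |f x| ≤ C₁ * Real.exp (-C₂ * euclNorm x)

/-! In one variable the sum is `1 + 2 ζ(2) = π²/3 + 1`. The summand over `ℤ^d` is a product of
one-variable summands, so the full sum is `(π²/3 + 1)^d`; dropping the term `j = 0`, which
equals `1`, leaves `(π²/3 + 1)^d - 1`, the right-hand side by the geometric-sum formula. -/

open Real

theorem HasSum.subtype_ne {β α : Type*} [AddCommGroup α] [TopologicalSpace α]
    [IsTopologicalAddGroup α] {f : β → α} {a : α} (hf : HasSum f a) (b : β) :
    HasSum (fun x : {x // x ≠ b} => f x) (a - f b) :=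
  (hasSum_singleton b f).hasSum_iff_compl.1 hf

theorem hasSum_one_div_nat_add_one_sq :
    HasSum (fun n : ℕ => 1 / ((n : ℝ) + 1) ^ 2) (π ^ 2 / 6) := by
  simpa using (hasSum_nat_add_iff' 1).2 hasSum_zeta_two

theorem hasSum_inv_sq_max_abs_one :
    HasSum (fun j : ℤ => ((max |(j : ℝ)| 1) ^ 2)⁻¹) (π ^ 2 / 3 + 1) := by
  have hsucc (n : ℕ) : ((max |((n + 1 : ℤ) : ℝ)| 1) ^ 2)⁻¹ = 1 / ((n : ℝ) + 1) ^ 2 := by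
    have hn : (1 : ℝ) ≤ n + 1 := le_add_of_nonneg_left n.cast_nonneg
    push_cast
    rw [abs_of_nonneg (by positivity), max_eq_left hn, one_div]
  have hneg (n : ℕ) : ((max |((-(n + 1) : ℤ) : ℝ)| 1) ^ 2)⁻¹ = 1 / ((n : ℝ) + 1) ^ 2 := by
    rw [Int.cast_neg, abs_neg, hsucc]
  have hsplit := HasSum.of_add_one_of_neg_add_one (f := fun j : ℤ => ((max |(j : ℝ)| 1) ^ 2)⁻¹)
    (hasSum_one_div_nat_add_one_sq.congr_fun hsucc) (hasSum_one_div_nat_add_one_sq.congr_fun hneg)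
  convert hsplit using 1
  norm_num
  ring

theorem hasSum_pi_prod_of_nonneg {ι : Type*} {n : ℕ} {f : Fin n → ι → ℝ} {a : Fin n → ℝ}
    (hf : ∀ i, HasSum (f i) (a i)) (hf₀ : ∀ i, 0 ≤ f i) :
    HasSum (fun x : Fin n → ι => ∏ i, f i (x i)) (∏ i, a i) := by
  induction n with
  | zero => simp
  | succ n ih =>
    have htail := ih (fun i => hf i.succ) (fun i => hf₀ i.succ)
    have htail₀ : 0 ≤ fun x : Fin n → ι => ∏ i, f i.succ (x i) := fun x =>
      prod_nonneg fun i _ => hf₀ i.succ (x i)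
    have hsummable := (hf 0).summable.mul_of_nonneg htail.summable (hf₀ 0) htail₀
    have hsplit := (hf 0).mul htail hsummable
    rw [Fin.prod_univ_succ, ← (Fin.consEquiv fun _ => ι).hasSum_iff]
    simpa [Function.comp_def, Fin.prod_univ_succ, Fin.consEquiv] using hsplit

/-- The constant `Ξ`: the sum over nonzero integer vectors `j` of
`(∏_h max{|j_h|,1})^{-2}` converges and equals `(π²/3) Σ_{h=1}^d (π²/3+1)^{h-1}`. -/
theorem xi_sum_eval (d : ℕ) :
    Summable (fun j : {j : Fin d → ℤ // j ≠ 0} =>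
      ((∏ h, max |(j.1 h : ℝ)| 1) ^ 2)⁻¹) ∧
    (∑' j : {j : Fin d → ℤ // j ≠ 0}, ((∏ h, max |(j.1 h : ℝ)| 1) ^ 2)⁻¹) =
      Real.pi ^ 2 / 3 * ∑ h ∈ Finset.range d, (Real.pi ^ 2 / 3 + 1) ^ h := by
  have hall := hasSum_pi_prod_of_nonneg (fun _ : Fin d => hasSum_inv_sq_max_abs_one)
    fun _ j => by positivity
  have hne := hall.subtype_ne 0
  simp only [prod_const, card_univ, Fintype.card_fin, Pi.zero_apply, Int.cast_zero, abs_zero,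
    zero_le_one, max_eq_right, one_pow, inv_one, prod_inv_distrib, prod_pow] at hne
  rw [← mul_geom_sum, add_sub_cancel_right] at hne
  exact ⟨hne.summable, hne.tsum_eq⟩
end
end

section
/- Let d ∈ ℕ, p > d/2 a real number, n ∈ ℕ with n ≥ 1, and j ∈ {1,…,d}. Then Σ_{k ∈ ℕ_0^d, k_j > n} |k|_∞^{−2p} ≤ 2^{d−1} / ((2p − d) n^{2p − d}), where |k|_∞ = max_{h=1,…,d} k_h and the sum (which converges) runs over all k ∈ ℕ_0^d whose j-th component exceeds n. -/
open MeasureTheory Filter Finset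

noncomputable section

-- binomial-type bound, real version
lemma realL1 (q : ℕ) {x : ℝ} (hx : 1 ≤ x) :
    (x - 1) * ((x + 1) ^ q - x ^ q) ≤ (2 ^ q - 1) * x ^ q := by
  induction q with
  | zero => simp
  | succ q ih =>
    have hX : (0:ℝ) ≤ x ^ q := by positivity
    have hXY : x ^ q ≤ (x + 1) ^ q := by
      apply pow_le_pow_left₀ (by linarith) (by linarith)
    have h2 : (1:ℝ) ≤ 2 ^ q := one_le_pow₀ (by norm_num)
    have hx0 : (0:ℝ) ≤ x := by linarith
    have ih' := mul_le_mul_of_nonneg_left ih hx0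
    simp only [pow_succ]
    nlinarith [mul_nonneg (mul_nonneg (by linarith : (0:ℝ) ≤ 2 ^ q - 1) (by linarith : (0:ℝ) ≤ x - 1)) hX,
      mul_nonneg (by linarith : (0:ℝ) ≤ x - 1) hX]

lemma realKey (q : ℕ) {a x : ℝ} (ha : 1 ≤ a) (hax : a ≤ x - 1) :
    a * (x + 1) ^ q - (a - 1) * x ^ q ≤ 2 ^ q * x ^ q := by
  have hx : 1 ≤ x := by linarith
  have hXY : x ^ q ≤ (x + 1) ^ q := by
    apply pow_le_pow_left₀ (by linarith) (by linarith)
  have h1 := realL1 q hx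
  nlinarith [mul_le_mul_of_nonneg_right (by linarith : a ≤ x - 1) (by linarith : (0:ℝ) ≤ (x+1)^q - x^q)]


lemma bernoulliStep {s : ℝ} (hs : 1 < s) {x : ℝ} (hx : 1 ≤ x) :
    (s - 1) * (x + 1) ^ (-s) ≤ x ^ (1 - s) - (x + 1) ^ (1 - s) := by
  have hx0 : (0:ℝ) < x := by linarith
  have hy0 : (0:ℝ) < x + 1 := by linarith
  have hB : 1 + s * (1 / x) ≤ (1 + 1 / x) ^ s :=
    one_add_mul_self_le_rpow_one_add
      (by have h : (0:ℝ) ≤ 1 / x := by positivity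
          linarith) hs.le
  have h1 : (1 : ℝ) + 1 / x = (x + 1) / x := by field_simp
  have h2 : ((x + 1) / x) ^ s = (x + 1) ^ s / x ^ s := Real.div_rpow hy0.le hx0.le s
  set A := x ^ s with hA
  set B := (x + 1) ^ s with hBdef
  have hA0 : 0 < A := Real.rpow_pos_of_pos hx0 s
  have hB0 : 0 < B := Real.rpow_pos_of_pos hy0 s
  have key : (x + s) * A ≤ x * B := by
    rw [h1, h2] at hB
    have h4 := mul_le_mul_of_nonneg_right hB hA0.le
    rw [div_mul_cancel₀ _ hA0.ne'] at h4
    have h3 : (x + s) = x * (1 + s * (1/x)) := by field_simp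
    rw [h3, mul_assoc]
    exact mul_le_mul_of_nonneg_left h4 hx0.le
  have e1 : x ^ (1 - s) = x / A := by
    rw [hA, eq_div_iff hA0.ne', ← Real.rpow_add hx0]
    norm_num
  have e2 : (x + 1) ^ (1 - s) = (x + 1) / B := by
    rw [hBdef, eq_div_iff hB0.ne', ← Real.rpow_add hy0]
    norm_num
  have e3 : (x + 1) ^ (-s) = 1 / B := by
    rw [hBdef, Real.rpow_neg hy0.le, one_div]
  rw [e1, e2, e3]
  rw [div_sub_div _ _ hA0.ne' hB0.ne', mul_one_div, div_le_div_iff₀ hB0 (by positivity)]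
  nlinarith [key, hA0, hB0]


lemma sumIocAux {s : ℝ} (hs : 1 < s) {n : ℕ} (hn : 1 ≤ n) (N : ℕ) :
    ∑ m ∈ Finset.Ioc n N, ((m:ℝ)) ^ (-s) + ((max n N : ℕ):ℝ) ^ (1 - s) / (s - 1)
      ≤ ((n:ℝ)) ^ (1 - s) / (s - 1) := by
  induction N with
  | zero =>
    rw [Finset.Ioc_eq_empty (by omega), Finset.sum_empty, Nat.max_eq_left (Nat.zero_le n)]
    linarith
  | succ N ih =>
    rcases le_or_gt (N + 1) n with h | h
    · rw [Finset.Ioc_eq_empty (by omega), Finset.sum_empty, Nat.max_eq_left (by omega)]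
      linarith
    · have hnN : n ≤ N := by omega
      rw [Finset.sum_Ioc_succ_top hnN, Nat.max_eq_right (by omega)]
      rw [Nat.max_eq_right hnN] at ih
      have hN1 : (1:ℝ) ≤ (N:ℝ) := by exact_mod_cast hn.trans hnN
      have hstep := bernoulliStep hs hN1
      have hs0 : (0:ℝ) < s - 1 := by linarith
      have h2 : ((N+1:ℕ):ℝ) ^ (-s) + ((N+1:ℕ):ℝ) ^ (1-s)/(s-1)
          ≤ ((N:ℕ):ℝ) ^ (1-s)/(s-1) := by
        push_cast
        have h3 : ((N:ℝ)+1) ^ (-s) ≤ ((N:ℝ) ^ (1-s) - ((N:ℝ)+1) ^ (1-s))/(s-1) := by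
          rw [le_div_iff₀ hs0, mul_comm]
          exact hstep
        rw [sub_div] at h3
        linarith
      push_cast at h2 ⊢
      linarith [h2]

lemma sumIoc_le {s : ℝ} (hs : 1 < s) {n : ℕ} (hn : 1 ≤ n) (N : ℕ) :
    ∑ m ∈ Finset.Ioc n N, ((m:ℝ)) ^ (-s) ≤ ((n:ℝ)) ^ (1 - s) / (s - 1) := by
  have h := sumIocAux hs hn N
  have h0 : 0 ≤ ((max n N : ℕ):ℝ) ^ (1 - s) / (s - 1) := by
    apply div_nonneg (Real.rpow_nonneg (by positivity) _) (by linarith)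
  linarith


lemma cardPi {d : ℕ} (j : Fin d) (S T : Finset ℕ) :
    (Fintype.piFinset (fun h : Fin d => if h = j then S else T)).card
      = S.card * T.card ^ (d - 1) := by
  classical
  rw [Fintype.card_piFinset]
  rw [← Finset.mul_prod_erase Finset.univ _ (Finset.mem_univ j)]
  rw [if_pos rfl]
  congr 1
  rw [Finset.prod_congr rfl (fun h hh => by rw [if_neg (Finset.ne_of_mem_erase hh)]),
    Finset.prod_const, Finset.card_erase_of_mem (Finset.mem_univ j), Finset.card_univ,
    Fintype.card_fin]

lemma cardFiber_le {d : ℕ} (j : Fin d) {n m : ℕ} (hn : 1 ≤ n) (hm : n < m)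
    (G : Finset (Fin d → ℕ)) (hG : ∀ k ∈ G, n < k j) :
    (((G.filter (fun k => Finset.univ.sup k = m)).card : ℝ))
      ≤ 2 ^ (d - 1) * (m:ℝ) ^ (d - 1) := by
  classical
  set A := Fintype.piFinset (fun h : Fin d => if h = j then Finset.Ioc n m
    else Finset.range (m+1)) with hAdef
  set B := Fintype.piFinset (fun h : Fin d => if h = j then Finset.Ioc n (m-1)
    else Finset.range m) with hBdef
  have hBA : B ⊆ A := by
    apply Fintype.piFinset_subset
    intro h
    by_cases hh : h = j
    · rw [if_pos hh, if_pos hh]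
      exact Finset.Ioc_subset_Ioc_right (by omega)
    · rw [if_neg hh, if_neg hh]
      exact Finset.range_subset_range.mpr (by omega)
  have hsub : G.filter (fun k => Finset.univ.sup k = m) ⊆ A \ B := by
    intro k hk
    rw [Finset.mem_filter] at hk
    obtain ⟨hkG, hsup⟩ := hk
    have hkj := hG k hkG
    have hle : ∀ h, k h ≤ m := fun h => hsup ▸ Finset.le_sup (Finset.mem_univ h)
    rw [Finset.mem_sdiff]
    constructor
    · rw [Fintype.mem_piFinset]
      intro h
      by_cases hh : h = j
      · rw [if_pos hh, hh]
        exact Finset.mem_Ioc.mpr ⟨hkj, hle j⟩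
      · rw [if_neg hh]
        exact Finset.mem_range.mpr (Nat.lt_succ_of_le (hle h))
    · intro hkB
      rw [Fintype.mem_piFinset] at hkB
      obtain ⟨h₀, -, hh₀⟩ := Finset.exists_mem_eq_sup Finset.univ
        ⟨j, Finset.mem_univ j⟩ k
      have hk0 : k h₀ = m := by rw [← hh₀]; exact hsup
      have hBh := hkB h₀
      by_cases hh : h₀ = j
      · rw [if_pos hh] at hBh
        rw [Finset.mem_Ioc] at hBh
        omega
      · rw [if_neg hh] at hBh
        rw [Finset.mem_range] at hBh
        omega
  have cardA : A.card = (m - n) * (m + 1) ^ (d - 1) := by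
    rw [hAdef, cardPi, Nat.card_Ioc, Finset.card_range]
  have cardB : B.card = (m - 1 - n) * m ^ (d - 1) := by
    rw [hBdef, cardPi, Nat.card_Ioc, Finset.card_range]
  have h1 : (G.filter (fun k => Finset.univ.sup k = m)).card ≤ A.card - B.card := by
    calc (G.filter (fun k => Finset.univ.sup k = m)).card ≤ (A \ B).card :=
          Finset.card_le_card hsub
      _ = A.card - B.card := Finset.card_sdiff_of_subset hBA
  have hBAcard : B.card ≤ A.card := Finset.card_le_card hBA
  have h2 : (((G.filter (fun k => Finset.univ.sup k = m)).card : ℝ))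
      ≤ (A.card : ℝ) - (B.card : ℝ) := by
    have := (Nat.cast_le (α := ℝ)).mpr h1
    rwa [Nat.cast_sub hBAcard] at this
  rw [cardA, cardB] at h2
  have hmn : ((m - n : ℕ) : ℝ) = (m:ℝ) - n := by
    rw [Nat.cast_sub hm.le]
  have hmn1 : ((m - 1 - n : ℕ) : ℝ) = (m:ℝ) - 1 - n := by
    rw [Nat.cast_sub (by omega), Nat.cast_sub (by omega)]
    push_cast
    ring
  push_cast [hmn, hmn1] at h2
  have hkey := realKey (d - 1) (a := (m:ℝ) - n) (x := (m:ℝ))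
    (by have h5 : (n:ℝ) + 1 ≤ m := by exact_mod_cast hm
        linarith)
    (by have : (1:ℝ) ≤ n := by exact_mod_cast hn
        have : (n:ℝ) ≤ (m:ℝ) := by exact_mod_cast hm.le
        linarith)
  have e : ((m:ℝ) - n - 1) = ((m:ℝ) - 1 - n) := by ring
  linarith [hkey]


/-- Tail bound for lattice sums of powers of the maximum norm: for `p > d/2`,
`Σ_{k ∈ ℕ_0^d, k_j > n} |k|_∞^{-2p} ≤ 2^{d-1} / ((2p-d) n^{2p-d})`. -/
theorem lattice_tail_bound
    (d : ℕ) (p : ℝ) (hp : (d : ℝ) / 2 < p) (n : ℕ) (hn : 1 ≤ n) (j : Fin d) :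
    Summable (fun k : {k : Fin d → ℕ // n < k j} =>
      ((Finset.univ.sup fun h => k.1 h : ℕ) : ℝ) ^ (-(2 * p))) ∧
    (∑' k : {k : Fin d → ℕ // n < k j},
        ((Finset.univ.sup fun h => k.1 h : ℕ) : ℝ) ^ (-(2 * p))) ≤
      (2 : ℝ) ^ (d - 1) / ((2 * p - d) * (n : ℝ) ^ (2 * p - (d : ℝ))) := by
  classical
  have hd : 0 < d := j.pos
  have hn1 : (1:ℝ) ≤ (n:ℝ) := by exact_mod_cast hn
  have hn0 : (0:ℝ) < (n:ℝ) := by linarith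
  set q := d - 1 with hqdef
  have hqc : (q:ℝ) = (d:ℝ) - 1 := by
    rw [hqdef, Nat.cast_sub hd, Nat.cast_one]
  set s : ℝ := 2 * p - (q:ℝ) with hsdef
  have hdp : (d:ℝ) < 2 * p := by linarith [hp]
  have hs1 : 1 < s := by rw [hsdef, hqc]; linarith
  have hs2 : s - 1 = 2 * p - (d:ℝ) := by rw [hsdef, hqc]; ring
  set v : {k : Fin d → ℕ // n < k j} → ℝ := fun k =>
    ((Finset.univ.sup fun h => k.1 h : ℕ) : ℝ) ^ (-(2 * p)) with hvdef
  have hv0 : ∀ k, 0 ≤ v k := fun k => Real.rpow_nonneg (Nat.cast_nonneg _) _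
  set w : (Fin d → ℕ) → ℝ := fun k => ((Finset.univ.sup k : ℕ) : ℝ) ^ (-(2 * p)) with hwdef
  set C : ℝ := (2 : ℝ) ^ (d - 1) / ((2 * p - d) * (n : ℝ) ^ (2 * p - (d:ℝ))) with hCdef
  have hC : C = 2 ^ q * ((n:ℝ) ^ (1 - s) / (s - 1)) := by
    have he : (1:ℝ) - s = -(2 * p - (d:ℝ)) := by rw [← hs2]; ring
    rw [hCdef, he, Real.rpow_neg hn0.le, hs2]
    have h1 : (0:ℝ) < 2 * p - (d:ℝ) := by linarith
    have h2 : (0:ℝ) < (n:ℝ) ^ (2 * p - (d:ℝ)) := Real.rpow_pos_of_pos hn0 _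
    rw [hqdef]
    field_simp
  have key : ∀ u : Finset {k : Fin d → ℕ // n < k j}, ∑ k ∈ u, v k ≤ C := by
    intro u
    set G := u.image (fun k => k.1) with hGdef
    have hsum1 : ∑ k ∈ G, w k = ∑ k ∈ u, v k := by
      rw [hGdef]
      exact Finset.sum_image (fun x _ y _ h => Subtype.ext h)
    have hGj : ∀ k ∈ G, n < k j := by
      intro k hk
      obtain ⟨a, _, rfl⟩ := Finset.mem_image.mp hk
      exact a.2
    set N := G.sup (fun k => Finset.univ.sup k) with hNdef
    have hmaps : ∀ k ∈ G, Finset.univ.sup k ∈ Finset.Ioc n N := by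
      intro k hk
      rw [Finset.mem_Ioc]
      exact ⟨lt_of_lt_of_le (hGj k hk) (Finset.le_sup (Finset.mem_univ j)),
        Finset.le_sup (f := fun k => Finset.univ.sup k) hk⟩
    have hsum2 : ∑ k ∈ G, w k
        = ∑ m ∈ Finset.Ioc n N, ∑ _k ∈ G.filter (fun k => Finset.univ.sup k = m),
            ((m:ℝ)) ^ (-(2 * p)) :=
      (Finset.sum_fiberwise_of_maps_to' hmaps (fun m => ((m:ℝ)) ^ (-(2 * p)))).symm
    have hsum3 : ∑ k ∈ u, v k = ∑ m ∈ Finset.Ioc n N,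
        ((G.filter (fun k => Finset.univ.sup k = m)).card : ℝ) * ((m:ℝ)) ^ (-(2 * p)) := by
      rw [← hsum1, hsum2]
      refine Finset.sum_congr rfl fun m _ => ?_
      rw [Finset.sum_const, nsmul_eq_mul]
    rw [hsum3]
    have hstep : ∀ m ∈ Finset.Ioc n N,
        ((G.filter (fun k => Finset.univ.sup k = m)).card : ℝ) * ((m:ℝ)) ^ (-(2 * p))
          ≤ 2 ^ q * ((m:ℝ)) ^ (-s) := by
      intro m hm
      rw [Finset.mem_Ioc] at hm
      have hm0 : (0:ℝ) < (m:ℝ) := by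
        have : (0:ℕ) < m := by omega
        exact_mod_cast this
      have hcard := cardFiber_le j hn hm.1 G hGj
      calc ((G.filter (fun k => Finset.univ.sup k = m)).card : ℝ) * ((m:ℝ)) ^ (-(2 * p))
          ≤ (2 ^ (d-1) * (m:ℝ) ^ (d-1)) * ((m:ℝ)) ^ (-(2 * p)) :=
            mul_le_mul_of_nonneg_right hcard (Real.rpow_nonneg hm0.le _)
        _ = 2 ^ q * ((m:ℝ)) ^ (-s) := by
            rw [← hqdef, mul_assoc]
            congr 1
            rw [← Real.rpow_natCast ((m:ℝ)) q, ← Real.rpow_add hm0]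
            congr 1
            rw [hsdef]
            ring
    calc ∑ m ∈ Finset.Ioc n N,
        ((G.filter (fun k => Finset.univ.sup k = m)).card : ℝ) * ((m:ℝ)) ^ (-(2 * p))
        ≤ ∑ m ∈ Finset.Ioc n N, 2 ^ q * ((m:ℝ)) ^ (-s) := Finset.sum_le_sum hstep
      _ = 2 ^ q * ∑ m ∈ Finset.Ioc n N, ((m:ℝ)) ^ (-s) := by rw [Finset.mul_sum]
      _ ≤ 2 ^ q * ((n:ℝ) ^ (1 - s) / (s - 1)) := by
          apply mul_le_mul_of_nonneg_left (sumIoc_le hs1 hn N) (by positivity)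
      _ = C := hC.symm
  have hsummable : Summable v := summable_of_sum_le (fun k => hv0 k) key
  exact ⟨hsummable, Summable.tsum_le_of_sum_le hsummable key⟩
end
end

section
/- Let f ∈ L¹(ℝ^d), L = (L_1,…,L_d) ∈ ℝ_+^d and k ∈ ℕ_0^d. Then (∏_{h=1}^d L_h)^{−1} ∫_{ℝ^d} f(x) e_k(x) dx = (2^{d−1} ∏_{h=1}^d L_h)^{−1} Σ_{s ∈ {1}×{−1,1}^{d−1}} Re{ f̂( π (s k)/(2L) ) · exp( i (π/2) s·k ) }, where (s k / L)_h = s_h k_h / L_h and s·k = Σ_h s_h k_h. -/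
/-! Writing `2 cos t = e^{it} + e^{-it}` and expanding the product gives
`∏_h cos θ_h = 2^{-d} ∑_{s ∈ {±1}^d} cos (s·θ)`; since cosine is even, the terms for `s` and `-s`
agree, so the sum may be restricted to `s_1 = 1` at the cost of a factor `2`. For
`θ_h = k_h π (x_h + L_h) / (2 L_h)` the phase is affine in `x`, namely
`s·θ = u·x + (π/2) s·k` with `u = π s k / (2L)`, so integrating `f` against `cos (s·θ)` gives
`Re (f̂(u) e^{i (π/2) s·k})`. -/

open MeasureTheory Filter Finset

noncomputable section

lemma two_pow_mul_prod_cos {d : ℕ} (θ : Fin d → ℝ) :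
    2 ^ d * ∏ h, Real.cos (θ h) = ∑ σ : Fin d → Bool, Real.cos (∑ h, sgn σ h * θ h) := by
  have two_mul_cos (t : ℝ) :
      2 * Complex.cos t = ∑ b : Bool, Complex.exp (((if b then 1 else -1) * t : ℝ) * Complex.I) := by
    rw [Fintype.sum_bool, Complex.cos]
    simp only [if_true, Bool.false_eq_true, if_false]
    push_cast
    ring_nf
  have key : ((2 ^ d * ∏ h, Real.cos (θ h) : ℝ) : ℂ) =
      ∑ σ : Fin d → Bool, Complex.exp ((∑ h, sgn σ h * θ h : ℝ) * Complex.I) := by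
    have : (2 : ℂ) ^ d * ∏ h, Complex.cos (θ h) = ∏ h, 2 * Complex.cos (θ h) := by
      simp [Finset.prod_mul_distrib]
    push_cast
    simp_rw [this, two_mul_cos, Fintype.prod_sum, ← Complex.exp_sum, Finset.sum_mul, sgn]
    push_cast
    rfl
  simpa only [Complex.ofReal_re, Complex.re_sum, Complex.exp_ofReal_mul_I_re] using
    congrArg Complex.re key

lemma mem_signSet_succ {n : ℕ} {σ : Fin (n + 1) → Bool} : σ ∈ signSet (n + 1) ↔ σ 0 = true := by
  simp only [signSet, Finset.mem_filter, Finset.mem_univ, true_and]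
  exact ⟨fun hσ => hσ 0 rfl, fun hσ h h0 => (Fin.ext h0 : h = 0) ▸ hσ⟩

lemma sum_eq_two_nsmul_sum_signSet {M : Type*} [AddCommMonoid M] {n : ℕ}
    (F : (Fin (n + 1) → Bool) → M) (hF : ∀ σ, F (fun h => !σ h) = F σ) :
    ∑ σ, F σ = 2 • ∑ σ ∈ signSet (n + 1), F σ := by
  have hneg : ∑ σ ∈ (signSet (n + 1))ᶜ, F σ = ∑ σ ∈ signSet (n + 1), F σ := by
    refine Finset.sum_nbij' (fun σ h => !σ h) (fun σ h => !σ h) ?_ ?_ ?_ ?_ fun σ _ => (hF σ).symm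
    all_goals simp [mem_signSet_succ]
  rw [← Finset.sum_add_sum_compl (signSet (n + 1)), hneg, two_nsmul]

lemma prod_cos_eq_sum_signSet {d : ℕ} (θ : Fin d → ℝ) :
    ∏ h, Real.cos (θ h) = (2 ^ (d - 1))⁻¹ * ∑ σ ∈ signSet d, Real.cos (∑ h, sgn σ h * θ h) := by
  cases d with
  | zero => simp [signSet]
  | succ n =>
    have hsign (σ : Fin (n + 1) → Bool) :
        ∑ h, sgn (fun h => !σ h) h * θ h = -∑ h, sgn σ h * θ h := by
      rw [← Finset.sum_neg_distrib]
      exact Finset.sum_congr rfl fun h _ => by cases hσ : σ h <;> simp [sgn, hσ]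
    have := two_pow_mul_prod_cos θ
    rw [sum_eq_two_nsmul_sum_signSet _ fun σ => by rw [hsign, Real.cos_neg], nsmul_eq_mul,
      Nat.cast_ofNat, pow_succ] at this
    rw [Nat.add_sub_cancel]
    field_simp
    linarith

namespace MeasureTheory

variable {α : Type*} [MeasurableSpace α] {μ : Measure α} {f φ : α → ℝ}

lemma Integrable.ofReal_mul_exp_mul_I (hf : Integrable f μ) (hφ : Measurable φ) :
    Integrable (fun x => (f x : ℂ) * Complex.exp (φ x * Complex.I)) μ :=
  hf.ofReal.mul_bdd (by fun_prop) (ae_of_all _ fun x => (Complex.norm_exp_ofReal_mul_I _).le)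

lemma Integrable.mul_cos (hf : Integrable f μ) (hφ : Measurable φ) :
    Integrable (fun x => f x * Real.cos (φ x)) μ := by
  simpa only [RCLike.re_to_complex, Complex.re_ofReal_mul, Complex.exp_ofReal_mul_I_re] using
    (hf.ofReal_mul_exp_mul_I hφ).re

lemma integral_mul_cos_eq_re_integral (hf : Integrable f μ) (hφ : Measurable φ) :
    ∫ x, f x * Real.cos (φ x) ∂μ = (∫ x, (f x : ℂ) * Complex.exp (φ x * Complex.I) ∂μ).re := by
  simpa only [RCLike.re_to_complex, Complex.re_ofReal_mul, Complex.exp_ofReal_mul_I_re] using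
    integral_re (hf.ofReal_mul_exp_mul_I hφ)

end MeasureTheory

lemma integral_mul_cos_add_eq_re_fourierT {d : ℕ} {f : (Fin d → ℝ) → ℝ} (hf : Integrable f)
    (u : Fin d → ℝ) (c : ℝ) :
    ∫ x, f x * Real.cos (∑ h, u h * x h + c) = (fourierT f u * Complex.exp (c * Complex.I)).re := by
  rw [integral_mul_cos_eq_re_integral hf (by fun_prop), fourierT, ← integral_mul_const]
  congr 2 with x
  rw [mul_assoc, ← Complex.exp_add]
  push_cast
  ring_nf

/-- Key identity of the COS method: the (untruncated) cosine coefficients of `f`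
are given by evaluations of its Fourier transform. -/
theorem cos_coef_from_fourier
    {d : ℕ} (f : (Fin d → ℝ) → ℝ) (hf : Integrable f)
    (L : Fin d → ℝ) (hL : ∀ h, 0 < L h) (k : Fin d → ℕ) :
    (∏ h, L h)⁻¹ * (∫ x : Fin d → ℝ, f x * cosBasis L k x) =
      cosCoef (fourierT f) L k := by
  set θ : (Fin d → ℝ) → Fin d → ℝ := fun x h => (k h : ℝ) * Real.pi * (x h + L h) / (2 * L h)
  have hphase (σ : Fin d → Bool) (x : Fin d → ℝ) :
      ∑ h, sgn σ h * θ x h = ∑ h, Real.pi * (sgn σ h * k h) / (2 * L h) * x h +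
        Real.pi / 2 * ∑ h, sgn σ h * k h := by
    rw [Finset.mul_sum, ← Finset.sum_add_distrib]
    refine Finset.sum_congr rfl fun h _ => ?_
    have := (hL h).ne'
    simp only [θ]
    field_simp
  have hint (σ : Fin d → Bool) : Integrable fun x => f x * Real.cos (∑ h, sgn σ h * θ x h) :=
    hf.mul_cos (by fun_prop)
  calc (∏ h, L h)⁻¹ * ∫ x, f x * cosBasis L k x
      = (∏ h, L h)⁻¹ * ∫ x, (2 ^ (d - 1))⁻¹ *
          ∑ σ ∈ signSet d, f x * Real.cos (∑ h, sgn σ h * θ x h) := by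
        simp_rw [cosBasis, prod_cos_eq_sum_signSet, Finset.mul_sum, mul_left_comm, θ]
    _ = (2 ^ (d - 1) * ∏ h, L h)⁻¹ *
          ∑ σ ∈ signSet d, ∫ x, f x * Real.cos (∑ h, sgn σ h * θ x h) := by
        rw [integral_const_mul, integral_finsetSum _ fun σ _ => hint σ, mul_inv]
        ring
    _ = cosCoef (fourierT f) L k := by
        rw [cosCoef]
        congr 1
        refine Finset.sum_congr rfl fun σ _ => ?_
        simp_rw [hphase, integral_mul_cos_add_eq_re_fourierT hf]
        push_cast
        ring_nf
end
end

section
/- Let d ∈ ℕ, K > 0 and define the arithmetic basket put payoff w(x) = max(K − Σ_{h=1}^d e^{x_h}, 0) for x ∈ ℝ^d. Then for every z = (z_1,…,z_d) ∈ ℂ^d with Im z_h < 0 for all h, the function x ↦ e^{i z·x} w(x) is integrable on ℝ^d and ∫_{ℝ^d} e^{i z·x} w(x) dx = K^{(1 + i Σ_{h=1}^d z_h)} · ( ∏_{h=1}^d Γ(i z_h) ) / Γ( i Σ_{h=1}^d z_h + 2 ), where Γ is the complex Gamma function and K^w := exp(w log K) for w ∈ ℂ. -/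
open MeasureTheory Filter Finset

noncomputable section

/-!
Raise the payoff to a complex power `p` with `Re p > 0` and induct on `d`. Integrating out
`x₂, …, x_d` first leaves `(K - e^{x₁})₊^q` with `q = p + i(z₂ + ⋯ + z_d)`, times a constant; after
`t = e^{x₁}` the remaining integral is the Beta integral
`∫₀^K t^{iz₁-1} (K - t)^q dt = K^{iz₁+q} Γ(iz₁) Γ(q+1) / Γ(iz₁+q+1)`, and these Beta factors
telescope to `Γ(p+1) ∏ Γ(iz_h) / Γ(i Σ z_h + p + 1)`. Fubini is justified by the same formula for
the modulus of the integrand, which is the integrand for the parameters `i Im z` and `Re p`.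
-/

open Set

section ExpSubstitution

variable {E : Type*} [NormedAddCommGroup E] [NormedSpace ℝ E]

theorem integrable_exp_smul_comp_exp_iff (g : ℝ → E) :
    Integrable (fun x ↦ Real.exp x • g (Real.exp x)) ↔ IntegrableOn g (Ioi 0) := by
  rw [← integrableOn_univ, ← Real.range_exp, ← image_univ]
  simpa [abs_of_pos (Real.exp_pos _)] using (integrableOn_image_iff_integrableOn_abs_deriv_smul
    MeasurableSet.univ (fun x _ ↦ (Real.hasDerivAt_exp x).hasDerivWithinAt)
    Real.exp_injective.injOn g).symm

theorem integral_exp_smul_comp_exp (g : ℝ → E) :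
    ∫ x, Real.exp x • g (Real.exp x) = ∫ y in Ioi 0, g y := by
  rw [← Real.range_exp, ← image_univ, integral_image_eq_integral_abs_deriv_smul
    MeasurableSet.univ (fun x _ ↦ (Real.hasDerivAt_exp x).hasDerivWithinAt)
    Real.exp_injective.injOn g]
  simp [abs_of_pos (Real.exp_pos _)]

end ExpSubstitution

theorem Complex.ofReal_exp_cpow (y : ℝ) (w : ℂ) :
    (Real.exp y : ℂ) ^ w = Complex.exp (y * w) := by
  rw [Complex.cpow_def_of_ne_zero (by simp), ← Complex.ofReal_log (Real.exp_pos y).le,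
    Real.log_exp]

theorem Complex.ofReal_max_zero_cpow_eq_zero_of_nonpos {a : ℝ} (ha : a ≤ 0) {p : ℂ}
    (hp : p ≠ 0) :
    ((max a 0 : ℝ) : ℂ) ^ p = 0 := by
  rw [max_eq_right ha, Complex.ofReal_zero, Complex.zero_cpow hp]

section Beta

variable {K : ℝ} {u p : ℂ}

theorem cpow_mul_max_sub_cpow_eq_zero_of_le (u : ℂ) (hp : p ≠ 0) {t : ℝ} (ht : K ≤ t) :
    (t : ℂ) ^ (u - 1) * ((max (K - t) 0 : ℝ) : ℂ) ^ p = 0 := by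
  rw [Complex.ofReal_max_zero_cpow_eq_zero_of_nonpos (sub_nonpos.2 ht) hp, mul_zero]

theorem integrableOn_Ioi_cpow_mul_max_sub_cpow (hK : 0 < K) (hu : 0 < u.re) (hp : 0 < p.re) :
    IntegrableOn (fun t : ℝ ↦ (t : ℂ) ^ (u - 1) * ((max (K - t) 0 : ℝ) : ℂ) ^ p) (Ioi 0) := by
  have hIoc : IntegrableOn (fun t : ℝ ↦ (t : ℂ) ^ (u - 1) * ((max (K - t) 0 : ℝ) : ℂ) ^ p)
      (Ioc 0 K) := by
    rw [← intervalIntegrable_iff_integrableOn_Ioc_of_le hK.le]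
    refine (intervalIntegral.intervalIntegrable_cpow' (by simpa using hu)).mul_continuousOn ?_
    exact ((Complex.continuous_ofReal_cpow_const hp).comp (by fun_prop)).continuousOn
  exact hIoc.of_forall_sdiff_eq_zero measurableSet_Ioi fun t ht ↦
    cpow_mul_max_sub_cpow_eq_zero_of_le u (Complex.ne_zero_of_re_pos hp)
      (le_of_not_ge fun h ↦ ht.2 ⟨ht.1, h⟩)

theorem integral_Ioi_cpow_mul_max_sub_cpow (hK : 0 < K) (hu : 0 < u.re) (hp : 0 < p.re) :
    ∫ t in Ioi (0 : ℝ), (t : ℂ) ^ (u - 1) * ((max (K - t) 0 : ℝ) : ℂ) ^ p =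
      (K : ℂ) ^ (u + p) *
        (Complex.Gamma u * Complex.Gamma (p + 1) / Complex.Gamma (u + p + 1)) := by
  have hp1 : 0 < (p + 1).re := by simp; linarith
  have hΓ : Complex.Gamma (u + p + 1) ≠ 0 := Complex.Gamma_ne_zero_of_re_pos (by simp; linarith)
  have hbeta : ∫ t in (0)..K, (t : ℂ) ^ (u - 1) * ((max (K - t) 0 : ℝ) : ℂ) ^ p =
      ∫ t in (0)..K, (t : ℂ) ^ (u - 1) * ((K : ℂ) - t) ^ ((p + 1) - 1) := by
    refine intervalIntegral.integral_congr fun t ht ↦ ?_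
    rw [uIcc_of_le hK.le] at ht
    simp [max_eq_left (sub_nonneg.2 ht.2)]
  rw [setIntegral_eq_of_subset_of_forall_sdiff_eq_zero measurableSet_Ioi Ioc_subset_Ioi_self
      fun t ht ↦ cpow_mul_max_sub_cpow_eq_zero_of_le u (Complex.ne_zero_of_re_pos hp)
        (le_of_not_ge fun h ↦ ht.2 ⟨ht.1, h⟩),
    ← intervalIntegral.integral_of_le hK.le, hbeta, Complex.betaIntegral_scaled _ _ hK,
    mul_div_assoc', eq_div_iff hΓ, mul_assoc, Complex.Gamma_mul_Gamma_eq_betaIntegral hu hp1]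
  ring_nf

end Beta

section OneDim

variable {z p : ℂ}

theorem exp_mul_max_sub_exp_cpow_eq_exp_smul (z p : ℂ) (K y : ℝ) :
    Complex.exp (Complex.I * (z * y)) * ((max (K - Real.exp y) 0 : ℝ) : ℂ) ^ p =
      Real.exp y • ((Real.exp y : ℂ) ^ (Complex.I * z - 1) *
        ((max (K - Real.exp y) 0 : ℝ) : ℂ) ^ p) := by
  rw [Complex.real_smul, ← mul_assoc ((Real.exp y : ℝ) : ℂ), Complex.ofReal_exp_cpow,
    Complex.ofReal_exp, ← Complex.exp_add]
  ring_nf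

theorem integrable_exp_mul_max_sub_exp_cpow (hz : z.im < 0) (hp : 0 < p.re) (K : ℝ) :
    Integrable (fun y : ℝ ↦
      Complex.exp (Complex.I * (z * y)) * ((max (K - Real.exp y) 0 : ℝ) : ℂ) ^ p) := by
  rcases le_or_gt K 0 with hK | hK
  · have hzero (y : ℝ) : K - Real.exp y ≤ 0 := by linarith [Real.exp_pos y]
    simp only [Complex.ofReal_max_zero_cpow_eq_zero_of_nonpos (hzero _)
      (Complex.ne_zero_of_re_pos hp), mul_zero]
    exact integrable_zero _ _ _
  · simp only [exp_mul_max_sub_exp_cpow_eq_exp_smul z p K]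
    exact (integrable_exp_smul_comp_exp_iff _).2
      (integrableOn_Ioi_cpow_mul_max_sub_cpow hK (by simpa using hz) hp)

theorem integral_exp_mul_max_sub_exp_cpow (hz : z.im < 0) (hp : 0 < p.re) (K : ℝ) :
    ∫ y : ℝ, Complex.exp (Complex.I * (z * y)) * ((max (K - Real.exp y) 0 : ℝ) : ℂ) ^ p =
      ((max K 0 : ℝ) : ℂ) ^ (p + Complex.I * z) *
        (Complex.Gamma (Complex.I * z) * Complex.Gamma (p + 1) /
          Complex.Gamma (Complex.I * z + p + 1)) := by
  rcases le_or_gt K 0 with hK | hK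
  · have hzero (y : ℝ) : K - Real.exp y ≤ 0 := by linarith [Real.exp_pos y]
    have hq : 0 < (p + Complex.I * z).re := by simp; linarith
    simp only [Complex.ofReal_max_zero_cpow_eq_zero_of_nonpos (hzero _)
      (Complex.ne_zero_of_re_pos hp), Complex.ofReal_max_zero_cpow_eq_zero_of_nonpos hK
      (Complex.ne_zero_of_re_pos hq), mul_zero, zero_mul, integral_zero]
  · simp only [exp_mul_max_sub_exp_cpow_eq_exp_smul z p K]
    rw [integral_exp_smul_comp_exp
        (fun t : ℝ ↦ (t : ℂ) ^ (Complex.I * z - 1) * ((max (K - t) 0 : ℝ) : ℂ) ^ p),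
      integral_Ioi_cpow_mul_max_sub_cpow hK (by simpa using hz) hp, max_eq_left hK.le,
      add_comm p (Complex.I * z)]

end OneDim

section Basket

def basketIntegrand {d : ℕ} (z : Fin d → ℂ) (p : ℂ) (K : ℝ) (x : Fin d → ℝ) : ℂ :=
  Complex.exp (Complex.I * ∑ h, z h * (x h : ℂ)) *
    ((max (K - ∑ h, Real.exp (x h)) 0 : ℝ) : ℂ) ^ p

def basketGammaRatio {d : ℕ} (z : Fin d → ℂ) (p : ℂ) : ℂ :=
  Complex.Gamma (p + 1) * (∏ h, Complex.Gamma (Complex.I * z h)) /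
    Complex.Gamma (Complex.I * ∑ h, z h + p + 1)

variable {d : ℕ}

theorem basketIntegrand_cons (z : Fin (d + 1) → ℂ) (p : ℂ) (K y : ℝ) (x : Fin d → ℝ) :
    basketIntegrand z p K (Fin.cons y x) = Complex.exp (Complex.I * (z 0 * y)) *
      basketIntegrand (Fin.tail z) p (K - Real.exp y) x := by
  simp only [basketIntegrand, Fin.sum_univ_succ, Fin.cons_zero, Fin.cons_succ, Fin.tail,
    mul_add, Complex.exp_add, sub_sub, mul_assoc]

theorem ofReal_norm_basketIntegrand (z : Fin d → ℂ) {p : ℂ} (hp : p.re ≠ 0) (K : ℝ)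
    (x : Fin d → ℝ) : (‖basketIntegrand z p K x‖ : ℂ) =
      basketIntegrand (fun h ↦ Complex.I * (z h).im) p.re K x := by
  rw [basketIntegrand, basketIntegrand, norm_mul, Complex.norm_exp,
    Complex.norm_cpow_eq_rpow_re_of_nonneg (le_max_right _ _) hp, Complex.ofReal_mul,
    Complex.ofReal_exp, Complex.ofReal_cpow (le_max_right _ _)]
  congr 2
  simp [Finset.mul_sum, ← mul_assoc]

theorem integral_norm_basketIntegrand (z : Fin d → ℂ) {p : ℂ} (hp : p.re ≠ 0) (K : ℝ) :
    ∫ x, ‖basketIntegrand z p K x‖ =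
      ‖∫ x, basketIntegrand (fun h ↦ Complex.I * (z h).im) p.re K x‖ := by
  simp_rw [← ofReal_norm_basketIntegrand z hp K]
  rw [integral_complex_ofReal, Complex.norm_real,
    Real.norm_of_nonneg (integral_nonneg fun _ ↦ norm_nonneg _)]

theorem re_add_I_mul_sum_pos {ι : Type*} [Fintype ι] {p : ℂ} (hp : 0 < p.re) {z : ι → ℂ}
    (hz : ∀ h, (z h).im ≤ 0) : 0 < (p + Complex.I * ∑ h, z h).re := by
  simp only [Complex.add_re, Complex.mul_re, Complex.I_re, Complex.I_im, Complex.im_sum]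
  linarith [Finset.sum_nonpos fun h (_ : h ∈ Finset.univ) ↦ hz h]

theorem basketGammaRatio_succ (z : Fin (d + 1) → ℂ) {p : ℂ}
    (hq : 0 < (p + Complex.I * ∑ h, Fin.tail z h).re) :
    basketGammaRatio z p = Complex.Gamma (Complex.I * z 0) *
      Complex.Gamma (p + Complex.I * ∑ h, Fin.tail z h + 1) /
      Complex.Gamma (Complex.I * z 0 + (p + Complex.I * ∑ h, Fin.tail z h) + 1) *
      basketGammaRatio (Fin.tail z) p := by
  have hΓ : Complex.Gamma (Complex.I * ∑ h, Fin.tail z h + p + 1) ≠ 0 := by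
    refine Complex.Gamma_ne_zero_of_re_pos ?_
    rw [add_comm _ p, Complex.add_re, Complex.one_re]
    linarith
  simp only [basketGammaRatio, Fin.sum_univ_succ, Fin.prod_univ_succ, Fin.tail] at hΓ ⊢
  rw [show Complex.I * (z 0 + ∑ h : Fin d, z h.succ) + p + 1 =
      Complex.I * z 0 + (p + Complex.I * ∑ h : Fin d, z h.succ) + 1 by ring,
    show p + Complex.I * ∑ h : Fin d, z h.succ + 1 =
      Complex.I * ∑ h : Fin d, z h.succ + p + 1 by ring]
  field_simp

theorem integrable_basketIntegrand_succ_iff (z : Fin (d + 1) → ℂ) (p : ℂ) (K : ℝ) :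
    Integrable (basketIntegrand z p K) ↔
      Integrable (fun q : ℝ × (Fin d → ℝ) ↦ Complex.exp (Complex.I * (z 0 * q.1)) *
        basketIntegrand (Fin.tail z) p (K - Real.exp q.1) q.2) (volume.prod volume) := by
  have he := (volume_preserving_piFinSuccAbove (fun _ : Fin (d + 1) ↦ ℝ) 0).symm
  rw [← Measure.volume_eq_prod, ← he.integrable_comp_emb (MeasurableEquiv.measurableEmbedding _)]
  simp only [MeasurableEquiv.piFinSuccAbove_symm_apply, Fin.insertNthEquiv, Equiv.coe_fn_mk,
    Fin.insertNth_zero', Function.comp_def, basketIntegrand_cons]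

theorem integral_basketIntegrand_succ (z : Fin (d + 1) → ℂ) (p : ℂ) (K : ℝ) :
    ∫ x, basketIntegrand z p K x =
      ∫ q : ℝ × (Fin d → ℝ), Complex.exp (Complex.I * (z 0 * q.1)) *
        basketIntegrand (Fin.tail z) p (K - Real.exp q.1) q.2 ∂(volume.prod volume) := by
  have he := (volume_preserving_piFinSuccAbove (fun _ : Fin (d + 1) ↦ ℝ) 0).symm
  rw [← Measure.volume_eq_prod, ← he.integral_comp (MeasurableEquiv.measurableEmbedding _)]
  simp only [MeasurableEquiv.piFinSuccAbove_symm_apply, Fin.insertNthEquiv, Equiv.coe_fn_mk,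
    Fin.insertNth_zero', basketIntegrand_cons]

theorem integrable_basketIntegrand_succ {z : Fin (d + 1) → ℂ} (hz : (z 0).im < 0) {p q : ℂ}
    (hq : 0 < q.re) (c K : ℝ) (htail : ∀ K', Integrable (basketIntegrand (Fin.tail z) p K'))
    (htail_norm : ∀ K', ∫ x, ‖basketIntegrand (Fin.tail z) p K' x‖ =
      ‖((max K' 0 : ℝ) : ℂ) ^ q‖ * c) :
    Integrable (basketIntegrand z p K) := by
  rw [integrable_basketIntegrand_succ_iff]
  refine (integrable_prod_iff ?_).2 ⟨.of_forall fun y ↦ (htail (K - Real.exp y)).const_mul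
    (Complex.exp (Complex.I * (z 0 * y))), ?_⟩
  · exact (by unfold basketIntegrand; fun_prop : Measurable _).aestronglyMeasurable
  have hslice (y : ℝ) : ∫ x, ‖Complex.exp (Complex.I * (z 0 * y)) *
      basketIntegrand (Fin.tail z) p (K - Real.exp y) x‖ =
        ‖Complex.exp (Complex.I * (z 0 * y)) * ((max (K - Real.exp y) 0 : ℝ) : ℂ) ^ q‖ * c := by
    simp_rw [norm_mul]
    rw [integral_const_mul, htail_norm, mul_assoc]
  simp only [hslice]
  exact (integrable_exp_mul_max_sub_exp_cpow hz hq K).norm.mul_const c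

/-- Any real `K` is allowed, so that the inner integral can be evaluated at strike `K - e^y`
for every `y`. -/
theorem integrable_basketIntegrand_and_integral_eq {z : Fin d → ℂ} (hz : ∀ h, (z h).im < 0)
    {p : ℂ} (hp : 0 < p.re) (K : ℝ) :
    Integrable (basketIntegrand z p K) ∧
      ∫ x, basketIntegrand z p K x =
        ((max K 0 : ℝ) : ℂ) ^ (p + Complex.I * ∑ h, z h) * basketGammaRatio z p := by
  induction d generalizing p K with
  | zero =>
    have hΓ : Complex.Gamma (p + 1) ≠ 0 :=
      Complex.Gamma_ne_zero_of_re_pos (by simp only [Complex.add_re, Complex.one_re]; linarith)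
    have hconst : basketIntegrand z p K = fun _ ↦ ((max K 0 : ℝ) : ℂ) ^ p := by
      funext x
      simp [basketIntegrand]
    simp [hconst, basketGammaRatio, hΓ, Measure.volume_pi_eq_dirac (isEmptyElim : Fin 0 → ℝ)]
  | succ d ih =>
    have hzt (h : Fin d) : (Fin.tail z h).im < 0 := hz h.succ
    have hq : 0 < (p + Complex.I * ∑ h, Fin.tail z h).re :=
      re_add_I_mul_sum_pos hp fun h ↦ (hzt h).le
    set zr : Fin d → ℂ := fun h ↦ Complex.I * (Fin.tail z h).im
    have hzr (h : Fin d) : (zr h).im < 0 := by simpa [zr] using hzt h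
    have hpr : 0 < (p.re : ℂ).re := by simpa using hp
    have hint : Integrable (basketIntegrand z p K) :=
      integrable_basketIntegrand_succ (hz 0) (re_add_I_mul_sum_pos hpr fun h ↦ (hzr h).le)
        ‖basketGammaRatio zr p.re‖ K (fun K' ↦ (ih hzt hp K').1) fun K' ↦ by
          rw [integral_norm_basketIntegrand _ hp.ne', (ih hzr hpr K').2, norm_mul]
    have hinner (y : ℝ) : ∫ x, Complex.exp (Complex.I * (z 0 * y)) *
        basketIntegrand (Fin.tail z) p (K - Real.exp y) x =
          Complex.exp (Complex.I * (z 0 * y)) * ((max (K - Real.exp y) 0 : ℝ) : ℂ) ^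
            (p + Complex.I * ∑ h, Fin.tail z h) * basketGammaRatio (Fin.tail z) p := by
      rw [integral_const_mul, (ih hzt hp _).2, mul_assoc]
    refine ⟨hint, ?_⟩
    rw [integral_basketIntegrand_succ,
      integral_prod _ ((integrable_basketIntegrand_succ_iff z p K).1 hint)]
    simp only [hinner]
    rw [integral_mul_const, integral_exp_mul_max_sub_exp_cpow (hz 0) hq,
      basketGammaRatio_succ z hq, Fin.sum_univ_succ]
    simp only [Fin.tail]
    ring_nf

end Basket

/-- Fourier transform of the arithmetic basket put payoff
`w(x) = max(K - Σ_h e^{x_h}, 0)` for `Im z_h < 0`. -/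
theorem basket_put_fourier
    (d : ℕ) (K : ℝ) (hK : 0 < K) (z : Fin d → ℂ) (hz : ∀ h, (z h).im < 0) :
    Integrable (fun x : Fin d → ℝ =>
      Complex.exp (Complex.I * ∑ h, z h * (x h : ℂ)) *
        ((max (K - ∑ h, Real.exp (x h)) 0 : ℝ) : ℂ)) ∧
    (∫ x : Fin d → ℝ, Complex.exp (Complex.I * ∑ h, z h * (x h : ℂ)) *
        ((max (K - ∑ h, Real.exp (x h)) 0 : ℝ) : ℂ)) =
      Complex.exp ((1 + Complex.I * ∑ h, z h) * (Real.log K : ℂ)) *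
        (∏ h, Complex.Gamma (Complex.I * z h)) /
        Complex.Gamma (Complex.I * (∑ h, z h) + 2) := by
  have hpayoff : basketIntegrand z 1 K = fun x : Fin d → ℝ =>
      Complex.exp (Complex.I * ∑ h, z h * (x h : ℂ)) *
        ((max (K - ∑ h, Real.exp (x h)) 0 : ℝ) : ℂ) := by
    funext x
    rw [basketIntegrand, Complex.cpow_one]
  obtain ⟨hint, hval⟩ := integrable_basketIntegrand_and_integral_eq hz (p := 1) (by simp) K
  rw [hpayoff] at hint hval
  refine ⟨hint, hval.trans ?_⟩
  rw [max_eq_left hK.le, Complex.cpow_def_of_ne_zero (by exact_mod_cast hK.ne'),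
    ← Complex.ofReal_log hK.le, mul_comm (Real.log K : ℂ), basketGammaRatio,
    Complex.Gamma_add_one 1 one_ne_zero, Complex.Gamma_one, mul_one, one_mul, add_assoc,
    one_add_one_eq_two, mul_div_assoc]
end
end
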